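/- Let M, C ≥ 0, q ≥ 1 a real number, and Δ ∈ (0, 1]. Let h : ℝ → ℝ be twice continuously differentiable with |h(y)|, |h'(y)|, |h''(y)| ≤ M for all y, and let u be the Δ-sliding average of h. Let v : ℝ → ℝ be three times continuously differentiable with |v(y)|, |v'(y)|, |v''(y)|, |v'''(y)| ≤ M for all y. Fix y₀ ∈ ℝ and suppose û₊, û₋, ṽ₊, ṽ₋ ∈ ℝ satisfy |û₊ − h(y₀ + Δ/2)| ≤ C·Δ³, |û₋ − h(y₀ − Δ/2)| ≤ C·Δ³, |ṽ₊ − v(y₀ + Δ/2)| ≤ C·Δ^q, and |ṽ₋ − v(y₀ − Δ/2)| ≤ C·Δ^q. Then there is a constant K depending only on M and C such that |(ṽ₊·û₊ − ṽ₋·û₋)/Δ − (u'(y₀)·v(y₀) + u(y₀)·v'(y₀))| ≤ K·(Δ² + Δ^{q−1}). -/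

import Mathlib

/-!
The discrete product rule `ab - cd = (a - c)(b + d)/2 + (a + c)(b - d)/2` splits the exact flux
difference `(v₊h₊ - v₋h₋)/Δ` into the centred difference of `h` times the mean of `v₊, v₋`, plus
the mean of `h₊, h₋` times the centred difference of `v`. Taylor expansion about `y₀` makes these
means and the centred difference of `v` `O(Δ²)`-close to `v y₀`, `u y₀` and `v' y₀`; for the
sliding average `u` this is because the linear Taylor term integrates to zero over the symmetric
cell. Replacing the exact point values by `û`, `ṽ` costs `O(Δ³)/Δ + O(Δ^q)/Δ`. All Taylor
remainders come from one mean-value estimate: `g a = 0` and `|g' x| ≤ K |x - a|ⁿ` give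
`|g x| ≤ K |x - a|ⁿ⁺¹`.
-/

open Set

section Taylor

variable {f : ℝ → ℝ} {M : ℝ}

theorem abs_le_mul_abs_sub_pow_succ {g g' : ℝ → ℝ} {a K : ℝ} {n : ℕ}
    (hg : ∀ x, HasDerivAt g (g' x) x) (hga : g a = 0)
    (hK : ∀ x, |g' x| ≤ K * |x - a| ^ n) (x : ℝ) :
    |g x| ≤ K * |x - a| ^ (n + 1) := by
  have hK0 : 0 ≤ K := by simpa using (abs_nonneg _).trans (hK (a + 1))
  have hbound : ∀ y ∈ uIcc a x, ‖g' y‖ ≤ K * |x - a| ^ n := fun y hy =>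
    (hK y).trans <| mul_le_mul_of_nonneg_left
      (pow_le_pow_left₀ (abs_nonneg _) (abs_sub_left_of_mem_uIcc hy) n) hK0
  have := (convex_uIcc a x).norm_image_sub_le_of_norm_hasDerivWithin_le
    (fun y _ => (hg y).hasDerivWithinAt) hbound left_mem_uIcc right_mem_uIcc
  rw [hga, sub_zero, Real.norm_eq_abs, Real.norm_eq_abs] at this
  rwa [pow_succ, ← mul_assoc]

theorem abs_sub_le_mul_abs_sub_of_abs_deriv_le (hf : Differentiable ℝ f)
    (hM : ∀ x, |deriv f x| ≤ M) (a x : ℝ) : |f x - f a| ≤ M * |x - a| := by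
  simpa using abs_le_mul_abs_sub_pow_succ (g := fun x => f x - f a) (n := 0)
    (fun y => (hf y).hasDerivAt.sub_const _) (sub_self _) (by simpa using hM) x

theorem abs_taylor_one_le (hf : Differentiable ℝ f) (hf' : Differentiable ℝ (deriv f))
    (hM : ∀ x, |deriv (deriv f) x| ≤ M) (a x : ℝ) :
    |f x - f a - (x - a) * deriv f a| ≤ M * |x - a| ^ 2 := by
  have hderiv (y : ℝ) : HasDerivAt (fun x => f x - f a - (x - a) * deriv f a)
      (deriv f y - deriv f a) y := by
    simpa using ((hf y).hasDerivAt.sub_const (f a)).fun_sub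
      (((hasDerivAt_id' y).sub_const a).mul_const (deriv f a))
  exact abs_le_mul_abs_sub_pow_succ hderiv (by simp)
    (by simpa using abs_sub_le_mul_abs_sub_of_abs_deriv_le hf' hM a) x

theorem abs_taylor_two_le (hf : Differentiable ℝ f) (hf' : Differentiable ℝ (deriv f))
    (hf'' : Differentiable ℝ (deriv (deriv f))) (hM : ∀ x, |deriv (deriv (deriv f)) x| ≤ M)
    (a x : ℝ) :
    |f x - f a - (x - a) * deriv f a - (x - a) ^ 2 / 2 * deriv (deriv f) a| ≤
      M * |x - a| ^ 3 := by
  have hderiv (y : ℝ) : HasDerivAt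
      (fun x => f x - f a - (x - a) * deriv f a - (x - a) ^ 2 / 2 * deriv (deriv f) a)
      (deriv f y - deriv f a - (y - a) * deriv (deriv f) a) y := by
    refine ((((hf y).hasDerivAt.sub_const (f a)).fun_sub
      (((hasDerivAt_id' y).sub_const a).mul_const (deriv f a))).fun_sub
      (((((hasDerivAt_id' y).sub_const a).fun_pow 2).div_const 2).mul_const
        (deriv (deriv f) a))).congr_deriv ?_
    ring
  exact abs_le_mul_abs_sub_pow_succ hderiv (by simp) (abs_taylor_one_le hf' hf'' hM a) x

theorem abs_add_div_two_sub_le (hf : Differentiable ℝ f) (hf' : Differentiable ℝ (deriv f))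
    (hM : ∀ x, |deriv (deriv f) x| ≤ M) (a t : ℝ) :
    |(f (a + t) + f (a - t)) / 2 - f a| ≤ M * t ^ 2 := by
  have hp := abs_taylor_one_le hf hf' hM a (a + t)
  have hm := abs_taylor_one_le hf hf' hM a (a - t)
  simp only [add_sub_cancel_left, sub_sub_cancel_left, abs_neg, sq_abs] at hp hm
  rw [abs_le] at hp hm ⊢
  constructor <;> linarith

theorem abs_sub_sub_two_mul_deriv_le (hf : Differentiable ℝ f)
    (hf' : Differentiable ℝ (deriv f)) (hf'' : Differentiable ℝ (deriv (deriv f)))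
    (hM : ∀ x, |deriv (deriv (deriv f)) x| ≤ M) (a t : ℝ) :
    |f (a + t) - f (a - t) - 2 * t * deriv f a| ≤ 2 * M * |t| ^ 3 := by
  have hp := abs_taylor_two_le hf hf' hf'' hM a (a + t)
  have hm := abs_taylor_two_le hf hf' hf'' hM a (a - t)
  simp only [add_sub_cancel_left, sub_sub_cancel_left, abs_neg, neg_sq] at hp hm
  rw [abs_le] at hp hm ⊢
  constructor <;> linarith

end Taylor

noncomputable def slidingAverage (Δ : ℝ) (h : ℝ → ℝ) (x : ℝ) : ℝ :=
  (1 / Δ) * ∫ s in (x - Δ / 2)..(x + Δ / 2), h s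

section SlidingAverage

variable {f : ℝ → ℝ} {M Δ : ℝ}

theorem abs_slidingAverage_le (hΔ : 0 < Δ) (hM : ∀ x, |f x| ≤ M) (x : ℝ) :
    |slidingAverage Δ f x| ≤ M := by
  have := intervalIntegral.norm_integral_le_of_norm_le_const
    (f := f) (a := x - Δ / 2) (b := x + Δ / 2) (fun s _ => hM s)
  rw [Real.norm_eq_abs, show x + Δ / 2 - (x - Δ / 2) = Δ by ring, abs_of_pos hΔ] at this
  rw [slidingAverage, abs_mul, abs_of_pos (one_div_pos.mpr hΔ), one_div_mul_eq_div,
    div_le_iff₀ hΔ]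
  exact this

theorem abs_slidingAverage_sub_le (hΔ : 0 < Δ) (hf : Differentiable ℝ f)
    (hf' : Differentiable ℝ (deriv f)) (hM : ∀ x, |deriv (deriv f) x| ≤ M) (x : ℝ) :
    |slidingAverage Δ f x - f x| ≤ M * (Δ / 2) ^ 2 := by
  have hc := hf.continuous
  have hrem : ∫ s in (x - Δ / 2)..(x + Δ / 2), (f s - f x - (s - x) * deriv f x) =
      Δ * (slidingAverage Δ f x - f x) := by
    rw [intervalIntegral.integral_sub (Continuous.intervalIntegrable (by fun_prop) _ _)
        (Continuous.intervalIntegrable (by fun_prop) _ _),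
      intervalIntegral.integral_sub (hc.intervalIntegrable _ _) intervalIntegrable_const,
      intervalIntegral.integral_const, intervalIntegral.integral_mul_const,
      intervalIntegral.integral_comp_sub_right (fun s => s), integral_id, slidingAverage]
    field_simp
    ring
  have hbound : ∀ s ∈ uIoc (x - Δ / 2) (x + Δ / 2),
      ‖f s - f x - (s - x) * deriv f x‖ ≤ M * (Δ / 2) ^ 2 := by
    intro s hs
    rw [uIoc_of_le (by linarith)] at hs
    have hsx : |s - x| ≤ Δ / 2 := abs_le.mpr ⟨by linarith [hs.1], by linarith [hs.2]⟩
    exact (abs_taylor_one_le hf hf' hM x s).trans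
      (mul_le_mul_of_nonneg_left (pow_le_pow_left₀ (abs_nonneg _) hsx 2)
        ((abs_nonneg _).trans (hM x)))
  have := intervalIntegral.norm_integral_le_of_norm_le_const hbound
  rw [hrem, Real.norm_eq_abs, abs_mul, abs_of_pos hΔ,
    show x + Δ / 2 - (x - Δ / 2) = Δ by ring, abs_of_pos hΔ, mul_comm] at this
  exact le_of_mul_le_mul_right this hΔ

end SlidingAverage

theorem abs_flux_difference_sub_le {h v : ℝ → ℝ} {M Δ : ℝ} (hΔ : 0 < Δ)
    (hh : Differentiable ℝ h) (hh' : Differentiable ℝ (deriv h))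
    (hv : Differentiable ℝ v) (hv' : Differentiable ℝ (deriv v))
    (hv'' : Differentiable ℝ (deriv (deriv v)))
    (hh0 : ∀ y, |h y| ≤ M) (hh1 : ∀ y, |deriv h y| ≤ M) (hh2 : ∀ y, |deriv (deriv h) y| ≤ M)
    (hv1 : ∀ y, |deriv v y| ≤ M) (hv2 : ∀ y, |deriv (deriv v) y| ≤ M)
    (hv3 : ∀ y, |deriv (deriv (deriv v)) y| ≤ M) (y₀ : ℝ) :
    |(v (y₀ + Δ / 2) * h (y₀ + Δ / 2) - v (y₀ - Δ / 2) * h (y₀ - Δ / 2)) / Δ -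
      ((h (y₀ + Δ / 2) - h (y₀ - Δ / 2)) / Δ * v y₀ + slidingAverage Δ h y₀ * deriv v y₀)| ≤
      M ^ 2 * Δ ^ 2 := by
  set p := y₀ + Δ / 2
  set m := y₀ - Δ / 2
  set A := slidingAverage Δ h y₀
  have hM : 0 ≤ M := (abs_nonneg _).trans (hh0 0)
  have hpm : |p - m| = Δ := by rw [show p - m = Δ by ring, abs_of_pos hΔ]
  have hD : |(h p - h m) / Δ| ≤ M := by
    rw [abs_div, abs_of_pos hΔ, div_le_iff₀ hΔ, ← hpm]
    exact abs_sub_le_mul_abs_sub_of_abs_deriv_le hh hh1 m p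
  have hw : |(v p - v m) / Δ| ≤ M := by
    rw [abs_div, abs_of_pos hΔ, div_le_iff₀ hΔ, ← hpm]
    exact abs_sub_le_mul_abs_sub_of_abs_deriv_le hv hv1 m p
  have hX : |(v p + v m) / 2 - v y₀| ≤ M * (Δ / 2) ^ 2 := abs_add_div_two_sub_le hv hv' hv2 _ _
  have hY : |(h p + h m) / 2 - A| ≤ 2 * (M * (Δ / 2) ^ 2) := by
    have := abs_sub_le ((h p + h m) / 2) (h y₀) A
    rw [abs_sub_comm (h y₀)] at this
    linarith [abs_add_div_two_sub_le hh hh' hh2 y₀ (Δ / 2),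
      abs_slidingAverage_sub_le hΔ hh hh' hh2 y₀]
  have hZ : |(v p - v m) / Δ - deriv v y₀| ≤ M * (Δ / 2) ^ 2 := by
    have := abs_sub_sub_two_mul_deriv_le hv hv' hv'' hv3 y₀ (Δ / 2)
    rw [abs_of_pos (half_pos hΔ)] at this
    rw [show (v p - v m) / Δ - deriv v y₀ = (v p - v m - 2 * (Δ / 2) * deriv v y₀) / Δ by
      field_simp, abs_div, abs_of_pos hΔ, div_le_iff₀ hΔ]
    linarith
  have hA : |A| ≤ M := abs_slidingAverage_le hΔ hh0 y₀
  have hsplit : (v p * h p - v m * h m) / Δ - ((h p - h m) / Δ * v y₀ + A * deriv v y₀) =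
      (h p - h m) / Δ * ((v p + v m) / 2 - v y₀) + ((h p + h m) / 2 - A) * ((v p - v m) / Δ) +
        A * ((v p - v m) / Δ - deriv v y₀) := by
    field_simp
    ring
  calc _ = |_| := congrArg _ hsplit
    _ ≤ |(h p - h m) / Δ| * |(v p + v m) / 2 - v y₀| +
          |(h p + h m) / 2 - A| * |(v p - v m) / Δ| + |A| * |(v p - v m) / Δ - deriv v y₀| := by
      rw [← abs_mul, ← abs_mul, ← abs_mul]
      exact abs_add_three _ _ _
    _ ≤ M * (M * (Δ / 2) ^ 2) + 2 * (M * (Δ / 2) ^ 2) * M + M * (M * (Δ / 2) ^ 2) := by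
      gcongr
    _ = M ^ 2 * Δ ^ 2 := by ring

theorem abs_mul_sub_mul_le {a b a' b' ε δ A B : ℝ} (ha : |a' - a| ≤ ε) (hb : |b' - b| ≤ δ)
    (hA : |a| ≤ A) (hB : |b| ≤ B) : |a' * b' - a * b| ≤ (A + ε) * δ + ε * B := by
  have ha' : |a'| ≤ A + ε := by
    have := abs_add_le (a' - a) a
    rw [sub_add_cancel] at this
    linarith
  calc |a' * b' - a * b| = |a' * (b' - b) + (a' - a) * b| := by ring_nf
    _ ≤ |a'| * |b' - b| + |a' - a| * |b| := by
      rw [← abs_mul, ← abs_mul]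
      exact abs_add_le _ _
    _ ≤ (A + ε) * δ + ε * B := by
      gcongr
      · exact (abs_nonneg _).trans ha'
      · exact (abs_nonneg _).trans ha

theorem abs_perturbed_mul_sub_div_le {a b a' b' M C q Δ : ℝ} (hΔ : 0 < Δ) (hΔ1 : Δ ≤ 1)
    (hq : 0 ≤ q) (hC : 0 ≤ C) (ha : |a' - a| ≤ C * Δ ^ q) (hb : |b' - b| ≤ C * Δ ^ 3)
    (hA : |a| ≤ M) (hB : |b| ≤ M) :
    |(a' * b' - a * b) / Δ| ≤ (M + C) * C * Δ ^ 2 + C * M * Δ ^ (q - 1) := by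
  have hΔq : Δ ^ q = Δ ^ (q - 1) * Δ := by
    rw [← Real.rpow_add_one hΔ.ne', sub_add_cancel]
  have hΔq1 : C * Δ ^ q ≤ C := mul_le_of_le_one_right hC (Real.rpow_le_one hΔ.le hΔ1 hq)
  rw [abs_div, abs_of_pos hΔ, div_le_iff₀ hΔ]
  calc |a' * b' - a * b| ≤ (M + C * Δ ^ q) * (C * Δ ^ 3) + C * Δ ^ q * M :=
        abs_mul_sub_mul_le ha hb hA hB
    _ ≤ (M + C) * (C * Δ ^ 3) + C * Δ ^ q * M := by gcongr
    _ = _ := by rw [hΔq]; ring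

/-- (Generalization of Theorem 2.2 of the paper.) Let `M, C ≥ 0`.
There is a constant `K`, depending only on `M` and `C`, such that for every real `q ≥ 1`,
all `Δ ∈ (0,1]`, all `h : ℝ → ℝ` twice continuously differentiable with
`|h|, |h'|, |h''| ≤ M` (whose `Δ`-sliding average is `u`), all `v : ℝ → ℝ` thrice
continuously differentiable with `|v|, |v'|, |v''|, |v'''| ≤ M`, every `y₀`, and all
values `û₊, û₋` accurate to `C·Δ³` and `ṽ₊, ṽ₋` accurate to `C·Δ^q`, one has
`|(ṽ₊û₊ − ṽ₋û₋)/Δ − (u'(y₀)v(y₀) + u(y₀)v'(y₀))| ≤ K·(Δ² + Δ^(q−1))`. -/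
theorem staggered_weno_low_order_interp (M C : ℝ) (hM : 0 ≤ M) (hC : 0 ≤ C) :
    ∃ K : ℝ, ∀ (q : ℝ), 1 ≤ q → ∀ (Δ : ℝ), 0 < Δ → Δ ≤ 1 →
      ∀ (h v : ℝ → ℝ), ContDiff ℝ 2 h →
        (∀ y, |h y| ≤ M) → (∀ y, |deriv h y| ≤ M) → (∀ y, |iteratedDeriv 2 h y| ≤ M) →
        ContDiff ℝ 3 v →
        (∀ y, |v y| ≤ M) → (∀ y, |deriv v y| ≤ M) →
        (∀ y, |iteratedDeriv 2 v y| ≤ M) → (∀ y, |iteratedDeriv 3 v y| ≤ M) →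
        ∀ (y₀ uhatP uhatM vtilP vtilM : ℝ),
          |uhatP - h (y₀ + Δ / 2)| ≤ C * Δ ^ 3 →
          |uhatM - h (y₀ - Δ / 2)| ≤ C * Δ ^ 3 →
          |vtilP - v (y₀ + Δ / 2)| ≤ C * Δ ^ q →
          |vtilM - v (y₀ - Δ / 2)| ≤ C * Δ ^ q →
          |(vtilP * uhatP - vtilM * uhatM) / Δ -
              ((h (y₀ + Δ / 2) - h (y₀ - Δ / 2)) / Δ * v y₀ +
                ((1 / Δ) * ∫ s in (y₀ - Δ / 2)..(y₀ + Δ / 2), h s) * deriv v y₀)| ≤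
            K * (Δ ^ 2 + Δ ^ (q - 1)) := by
  refine ⟨2 * (M + C) * C + 2 * C * M + M ^ 2, ?_⟩
  intro q hq Δ hΔ hΔ1 h v hh hh0 hh1 hh2 hv hv0 hv1 hv2 hv3 y₀ uhatP uhatM vtilP vtilM
    huP huM hvP hvM
  simp only [iteratedDeriv_eq_iterate, Function.iterate_succ_apply',
    Function.iterate_zero_apply] at hh2 hv2 hv3
  have hexact := abs_flux_difference_sub_le hΔ (hh.differentiable two_ne_zero)
    hh.differentiable_deriv_two (hv.differentiable three_ne_zero)
    (hv.of_le (by norm_num)).differentiable_deriv_two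
    (hv.deriv' (n := 2)).differentiable_deriv_two hh0 hh1 hh2 hv1 hv2 hv3 y₀
  have hP := abs_perturbed_mul_sub_div_le hΔ hΔ1 (by linarith) hC hvP huP (hv0 _) (hh0 _)
  have hN := abs_perturbed_mul_sub_div_le hΔ hΔ1 (by linarith) hC hvM huM (hv0 _) (hh0 _)
  have hΔq : 0 ≤ Δ ^ (q - 1) := by positivity
  set E := (v (y₀ + Δ / 2) * h (y₀ + Δ / 2) - v (y₀ - Δ / 2) * h (y₀ - Δ / 2)) / Δ -
      ((h (y₀ + Δ / 2) - h (y₀ - Δ / 2)) / Δ * v y₀ + slidingAverage Δ h y₀ * deriv v y₀)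
  calc _ = |(vtilP * uhatP - v (y₀ + Δ / 2) * h (y₀ + Δ / 2)) / Δ -
        (vtilM * uhatM - v (y₀ - Δ / 2) * h (y₀ - Δ / 2)) / Δ + E| := by
        simp only [E, slidingAverage]; ring_nf
    _ ≤ _ := (abs_add_le _ _).trans (add_le_add_left (abs_sub _ _) _)
    _ ≤ _ := by
      have : 0 ≤ (M + C) * C * Δ ^ (q - 1) := by positivity
      have : 0 ≤ C * M * Δ ^ 2 := by positivity
      have : 0 ≤ M ^ 2 * Δ ^ (q - 1) := by positivity
      linarith
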